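/- If A = A1 ∪ A2 is a separable γ-set of a finite simple graph G, with A1, A2 nonempty disjoint sets such that A1 dominates V(G) − A, then there is no edge of G with one endpoint in A1 and the other in A2. -/

import Mathlib

open SimpleGraph

variable {V : Type*}

/-- `D` is a dominating set of `G`: every vertex is in `D` or adjacent to a vertex of `D`. -/
def IsDomSet (G : SimpleGraph V) (D : Set V) : Prop :=
  ∀ v : V, ∃ d ∈ D, d = v ∨ G.Adj d v

/-- The domination number of `G`: minimum cardinality of a dominating set. -/
noncomputable def domNum (G : SimpleGraph V) : ℕ :=
  sInf {n | ∃ D : Set V, IsDomSet G D ∧ D.ncard = n}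

/-- The prism `πG` of `G`: two disjoint copies of `G` together with the matching
`{u (π u) : u ∈ V(G)}`, the second copy playing the role of `G'`. -/
def prism (G : SimpleGraph V) (π : Equiv.Perm V) : SimpleGraph (V ⊕ V) where
  Adj a b :=
    match a, b with
    | Sum.inl u, Sum.inl v => G.Adj u v
    | Sum.inr u, Sum.inr v => G.Adj u v
    | Sum.inl u, Sum.inr v => π u = v
    | Sum.inr u, Sum.inl v => π v = u
  symm := ⟨by
    rintro (u | u) (v | v) h
    · exact G.symm.symm _ _ h
    · exact h
    · exact h
    · exact G.symm.symm _ _ h⟩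
  loopless := ⟨by
    rintro (u | u) h
    · exact G.loopless.irrefl u h
    · exact G.loopless.irrefl u h⟩

/-- The closed neighborhood `N[v]` of a vertex. -/
def closedNbhd (G : SimpleGraph V) (v : V) : Set V :=
  insert v (G.neighborSet v)

/-- `x` is a `C₃`-free vertex: non-isolated and belonging to no triangle of `G`. -/
def C3Free (G : SimpleGraph V) (x : V) : Prop :=
  (∃ y, G.Adj x y) ∧ ∀ u v : V, G.Adj x u → G.Adj x v → ¬ G.Adj u v

/-- `A = A1 ∪ A2` is a separable γ-set of `G` (an `A1`-γ-set): `A1, A2` are nonempty,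
disjoint, `A` is a γ-set, and `A1` dominates `V(G) - A`. -/
def SepGammaSet (G : SimpleGraph V) (A1 A2 : Set V) : Prop :=
  A1.Nonempty ∧ A2.Nonempty ∧ Disjoint A1 A2 ∧
  IsDomSet G (A1 ∪ A2) ∧ (A1 ∪ A2).ncard = domNum G ∧
  ∀ v ∉ A1 ∪ A2, ∃ u ∈ A1, G.Adj u v

/-- The separable γ-set `A = A1 ∪ A2` is effective under `π`: `π(A)` is a γ-set of the
copy `G'` of `G` (identified with `G`) whose dominating part is `B2' = π(A2)`,
i.e. `π(A2)` dominates `V(G') - π(A)`. -/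
def Effective (G : SimpleGraph V) (π : Equiv.Perm V) (A1 A2 : Set V) : Prop :=
  IsDomSet G (⇑π '' (A1 ∪ A2)) ∧ (⇑π '' (A1 ∪ A2)).ncard = domNum G ∧
  ∀ v ∉ ⇑π '' (A1 ∪ A2), ∃ u ∈ ⇑π '' A2, G.Adj u v

/-- The star `K_{1,m}` on `Fin (m+1)`, with center `0` adjacent to the `m` leaves. -/
def starGraph (m : ℕ) : SimpleGraph (Fin (m + 1)) where
  Adj a b := (a = 0 ∧ b ≠ 0) ∨ (b = 0 ∧ a ≠ 0)
  symm := ⟨fun a b h => Or.symm h⟩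
  loopless := ⟨fun a h => by rcases h with ⟨h1, h2⟩ | ⟨h1, h2⟩ <;> exact h2 h1⟩

theorem domNum_le_ncard {G : SimpleGraph V} {D : Set V} (hD : IsDomSet G D) :
    domNum G ≤ D.ncard :=
  Nat.sInf_le ⟨D, hD, rfl⟩

theorem isDomSet_diff_singleton {G : SimpleGraph V} {D : Set V} {u v : V}
    (hu : u ∈ D) (huv : G.Adj u v) (hout : ∀ w ∉ D, ∃ x ∈ D \ {v}, G.Adj x w) :
    IsDomSet G (D \ {v}) := by
  intro w
  by_cases hwv : w = v
  · subst hwv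
    exact ⟨u, ⟨hu, huv.ne⟩, Or.inr huv⟩
  by_cases hwD : w ∈ D
  · exact ⟨w, ⟨hwD, hwv⟩, Or.inl rfl⟩
  · obtain ⟨x, hx, hxw⟩ := hout w hwD
    exact ⟨x, hx, Or.inr hxw⟩

/-- in a separable γ-set `A = A1 ∪ A2`, there is no edge between `A1` and `A2`. -/
theorem sep_gamma_set_no_edge [Fintype V] (G : SimpleGraph V) (A1 A2 : Set V)
    (h : SepGammaSet G A1 A2) :
    ∀ u ∈ A1, ∀ v ∈ A2, ¬ G.Adj u v := by
  rintro u hu v hv huv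
  obtain ⟨-, -, hdisj, -, hcard, hsep⟩ := h
  -- `A1` already dominates `V(G) - A` and `u` dominates `v`, so `A - {v}` is a smaller dominating set.
  have hdom : IsDomSet G ((A1 ∪ A2) \ {v}) := by
    refine isDomSet_diff_singleton (Or.inl hu) huv fun w hw => ?_
    obtain ⟨x, hx, hxw⟩ := hsep w hw
    exact ⟨x, ⟨Or.inl hx, fun hxv => hdisj.ne_of_mem hx hv hxv⟩, hxw⟩
  have hlt : ((A1 ∪ A2) \ {v}).ncard < (A1 ∪ A2).ncard :=
    Set.ncard_sdiff_singleton_lt_of_mem (Or.inr hv) (Set.toFinite _)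
  have hle := domNum_le_ncard hdom
  omega
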